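/- Let α > 1 and i ≥ 1, and suppose the attention logits z = (z_1, …, z_i) of query position i satisfy z_j ≤ z_max − S·(i−j)² for all j ≤ i, where S > 0 and z_max ∈ ℝ (a quadratic decay in distance, as induced by RoPE in the small-angle regime). Let τ = τ(z) be the α-entmax threshold and assume z_max > τ/(α−1). Then α-entmax(z)_j = 0 for every j with (i−j)² ≥ (z_max − τ/(α−1))/S; in particular, every token at distance i − j > ⌊√((z_max − τ/(α−1))/S)⌋ receives exactly zero attention. -/

import Mathlib

/-- The coordinate value of `α`-entmax with threshold `τ` at a logit `x`. -/
noncomputable def entmaxTerm (α τ x : ℝ) : ℝ :=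
  (max ((α - 1) * x - τ) 0) ^ ((1 : ℝ) / (α - 1))

/-!
An entmax coordinate vanishes as soon as its logit is at most `τ/(α-1)`. Under
quadratic decay, `z_j ≤ z_max - S (i-j)²` drops below `τ/(α-1)` once `S (i-j)²` exceeds the gap
`z_max - τ/(α-1)`, and an integer distance beyond `⌊√((z_max - τ/(α-1))/S)⌋` is such a distance.
-/

theorem entmaxTerm_eq_zero_of_le {α τ x : ℝ} (hα : 1 < α) (hx : x ≤ τ / (α - 1)) :
    entmaxTerm α τ x = 0 := by
  have hα₁ : 0 < α - 1 := sub_pos.mpr hα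
  have hneg : (α - 1) * x - τ ≤ 0 := sub_nonpos.mpr ((le_div_iff₀' hα₁).mp hx)
  rw [entmaxTerm, max_eq_right hneg, Real.zero_rpow (one_div_pos.mpr hα₁).ne']

theorem lt_sq_of_floor_sqrt_lt {x : ℝ} {n : ℤ} (h : ⌊√x⌋ < n) : x < (n : ℝ) ^ 2 := by
  have hsqrt : √x < n := Int.floor_lt.mp h
  exact (Real.sqrt_lt' ((Real.sqrt_nonneg x).trans_lt hsqrt)).mp hsqrt

theorem entmax_rope_hard_window_general
    (α : ℝ) (hα : 1 < α) (i : ℕ)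
    (S zmax : ℝ) (hS : 0 < S)
    (z : Fin i → ℝ)
    (hz : ∀ j : Fin i, z j ≤ zmax - S * ((i : ℝ) - ((j : ℕ) + 1)) ^ 2)
    (τ : ℝ) :
    (∀ j : Fin i, (zmax - τ / (α - 1)) / S ≤ ((i : ℝ) - ((j : ℕ) + 1)) ^ 2 →
      entmaxTerm α τ (z j) = 0) ∧
    (∀ j : Fin i, ((⌊Real.sqrt ((zmax - τ / (α - 1)) / S)⌋ : ℤ) : ℝ) < (i : ℝ) - ((j : ℕ) + 1) →
      entmaxTerm α τ (z j) = 0) := by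
  have window : ∀ j : Fin i, (zmax - τ / (α - 1)) / S ≤ ((i : ℝ) - ((j : ℕ) + 1)) ^ 2 →
      entmaxTerm α τ (z j) = 0 := by
    intro j hj
    have hgap : zmax - τ / (α - 1) ≤ S * ((i : ℝ) - ((j : ℕ) + 1)) ^ 2 :=
      (div_le_iff₀' hS).mp hj
    exact entmaxTerm_eq_zero_of_le hα (by linarith [hz j])
  refine ⟨window, fun j hj => window j ?_⟩
  have hsq := lt_sq_of_floor_sqrt_lt (n := (i : ℤ) - ((j : ℕ) + 1)) (by exact_mod_cast hj)
  push_cast at hsq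
  exact hsq.le

/-- RoPE-style quadratic logit decay with `α`-entmax yields a hard maximum attention
distance. Key positions `1, …, i` are represented by `j : Fin i` at position `j+1`. If
`z_j ≤ z_max − S·(i−(j+1))²` for all `j`, `τ` is the entmax threshold (characterized by
normalization), and `z_max > τ/(α−1)`, then every position `j` with
`(i−(j+1))² ≥ (z_max − τ/(α−1))/S` — in particular, every position at distance greater
than `⌊√((z_max − τ/(α−1))/S)⌋` — receives exactly zero attention. -/
theorem entmax_rope_hard_window
    (α : ℝ) (hα : 1 < α) (i : ℕ) (hi : 1 ≤ i)
    (S zmax : ℝ) (hS : 0 < S)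
    (z : Fin i → ℝ)
    (hz : ∀ j : Fin i, z j ≤ zmax - S * ((i : ℝ) - ((j : ℕ) + 1)) ^ 2)
    (τ : ℝ) (hτ : ∑ j, entmaxTerm α τ (z j) = 1)
    (hmax : τ / (α - 1) < zmax) :
    (∀ j : Fin i, (zmax - τ / (α - 1)) / S ≤ ((i : ℝ) - ((j : ℕ) + 1)) ^ 2 →
      entmaxTerm α τ (z j) = 0) ∧
    (∀ j : Fin i, ((⌊Real.sqrt ((zmax - τ / (α - 1)) / S)⌋ : ℤ) : ℝ) < (i : ℝ) - ((j : ℕ) + 1) →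
      entmaxTerm α τ (z j) = 0) :=
  entmax_rope_hard_window_general α hα i S zmax hS z hz τ
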